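/- Let a_1,...,a_n and b_1,...,b_n be sequences of positive integers, and define γ^a_n(l) and γ^b_n(l) as the sums Σ_{t ∈ I(n,l)} a_{t_1}···a_{t_l} and Σ_{t ∈ I(n,l)} b_{t_1}···b_{t_l} respectively (with value 1 at l = 0). If γ^a_n(l) = γ^b_n(l) for all l = 0, 1, ..., n, then a_i = b_i for all i = 1, ..., n. -/

import Mathlib

/-- `gamma a n l` = Σ over strictly increasing sequences `t : Fin l → {1,...,n}` with
`t i ≡ n + i - l (mod 2)` (1-indexed) of the products `a (t 1) ⋯ a (t l)`. -/
def gamma (a : ℕ → ℤ) (n l : ℕ) : ℤ :=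
  ∑ t ∈ Finset.univ.filter (fun t : Fin l → Fin n =>
      (∀ i j : Fin l, i < j → t i < t j) ∧
      (∀ i : Fin l, ((t i : ℕ) + 1 + l) % 2 = (n + ((i : ℕ) + 1)) % 2)),
    ∏ i : Fin l, a ((t i : ℕ) + 1)

lemma gamma_zero (a : ℕ → ℤ) (n : ℕ) : gamma a n 0 = 1 := by
  simp [gamma]

lemma gamma_of_lt (a : ℕ → ℤ) {n l : ℕ} (h : n < l) : gamma a n l = 0 := by
  unfold gamma
  refine Finset.sum_eq_zero fun t ht => absurd ?_ (Nat.not_le.mpr h)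
  simp only [Finset.mem_filter] at ht
  have hsm : StrictMono t := fun i j hij => ht.2.1 i j hij
  simpa using Fintype.card_le_of_injective t hsm.injective

lemma gamma_succ (a : ℕ → ℤ) (n l : ℕ) :
    gamma a (n+1) (l+1) =
      (if (l+1) % 2 = (n+1) % 2 then a 1 * gamma (fun i => a (i+1)) n l else 0)
      + gamma (fun i => a (i+1)) n (l+1) := by
  classical
  unfold gamma
  rw [← Finset.sum_filter_add_sum_filter_not _ (fun t : Fin (l+1) → Fin (n+1) => t 0 = 0)]
  congr 1
  · -- part A : t 0 = 0
    by_cases hpar : (l+1) % 2 = (n+1) % 2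
    · rw [if_pos hpar, Finset.mul_sum]
      have himg : ((Finset.univ.filter (fun t : Fin (l+1) → Fin (n+1) =>
            (∀ i j : Fin (l+1), i < j → t i < t j) ∧
            (∀ i : Fin (l+1), ((t i : ℕ) + 1 + (l+1)) % 2 = ((n+1) + ((i : ℕ) + 1)) % 2))).filter
            (fun t => t 0 = 0))
          = (Finset.univ.filter (fun s : Fin l → Fin n =>
            (∀ i j : Fin l, i < j → s i < s j) ∧
            (∀ i : Fin l, ((s i : ℕ) + 1 + l) % 2 = (n + ((i : ℕ) + 1)) % 2))).image
            (fun s => Fin.cases (0 : Fin (n+1)) (fun j => (s j).succ)) := by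
        ext t
        simp only [Finset.mem_filter, Finset.mem_image, Finset.mem_univ, true_and]
        constructor
        · rintro ⟨⟨hmono, hpt⟩, h0⟩
          have hpos : ∀ j : Fin l, 1 ≤ (t j.succ : ℕ) := by
            intro j
            have h1 := hmono 0 j.succ (Fin.succ_pos j)
            rw [h0] at h1
            have := Fin.lt_def.mp h1
            exact Nat.succ_le_of_lt (by simpa using this)
          refine ⟨fun j => ⟨(t j.succ : ℕ) - 1, by
              have := (t j.succ).isLt; have := hpos j; omega⟩, ⟨?_, ?_⟩, ?_⟩
          · intro i j hij
            have h1 := Fin.lt_def.mp (hmono i.succ j.succ (Fin.succ_lt_succ_iff.mpr hij))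
            have := hpos i
            exact Fin.mk_lt_mk.mpr (by omega)
          · intro j
            have h1 := hpt j.succ
            have h2 : ((j.succ : Fin (l+1)) : ℕ) = (j : ℕ) + 1 := Fin.val_succ j
            have := hpos j
            simp only [h2] at h1
            simp only []
            omega
          · funext i
            induction i using Fin.cases with
            | zero => simpa using h0.symm
            | succ j =>
              simp only [Fin.cases_succ]
              exact Fin.ext (by have := hpos j; simp [Fin.val_succ]; omega)
        · rintro ⟨s, ⟨hmono, hpt⟩, rfl⟩
          refine ⟨⟨?_, ?_⟩, by simp⟩
          · intro i j hij
            induction j using Fin.cases with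
            | zero => have := Fin.lt_def.mp hij; simp at this
            | succ k =>
              induction i using Fin.cases with
              | zero => simpa using Fin.succ_pos (s k)
              | succ m =>
                simp only [Fin.cases_succ]
                exact Fin.succ_lt_succ_iff.mpr (hmono m k (Fin.succ_lt_succ_iff.mp hij))
          · intro i
            induction i using Fin.cases with
            | zero => simp; omega
            | succ j =>
              have := hpt j
              simp only [Fin.cases_succ, Fin.val_succ]
              omega
      rw [himg, Finset.sum_image ?hinj]
      case hinj =>
        intro s1 _ s2 _ heq
        funext j
        have := congrFun heq j.succ
        simpa using this
      refine Finset.sum_congr rfl fun s hs => ?_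
      rw [Fin.prod_univ_succ]
      simp [Fin.val_succ]
    · rw [if_neg hpar]
      refine Finset.sum_eq_zero fun t ht => absurd ?_ hpar
      simp only [Finset.mem_filter, Finset.mem_univ, true_and] at ht
      obtain ⟨⟨hmono, hpt⟩, h0⟩ := ht
      have h1 := hpt 0
      rw [h0] at h1
      simp at h1
      omega
  · -- part B : t 0 ≠ 0
    have himg : ((Finset.univ.filter (fun t : Fin (l+1) → Fin (n+1) =>
          (∀ i j : Fin (l+1), i < j → t i < t j) ∧
          (∀ i : Fin (l+1), ((t i : ℕ) + 1 + (l+1)) % 2 = ((n+1) + ((i : ℕ) + 1)) % 2))).filter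
          (fun t => ¬ t 0 = 0))
        = (Finset.univ.filter (fun s : Fin (l+1) → Fin n =>
          (∀ i j : Fin (l+1), i < j → s i < s j) ∧
          (∀ i : Fin (l+1), ((s i : ℕ) + 1 + (l+1)) % 2 = (n + ((i : ℕ) + 1)) % 2))).image
          (fun s i => (s i).succ) := by
      ext t
      simp only [Finset.mem_filter, Finset.mem_image, Finset.mem_univ, true_and]
      constructor
      · rintro ⟨⟨hmono, hpt⟩, h0⟩
        have h0pos : 1 ≤ (t 0 : ℕ) := by
          rcases Nat.eq_zero_or_pos (t 0 : ℕ) with h | h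
          · exact absurd (Fin.ext h) h0
          · exact h
        have hpos : ∀ i : Fin (l+1), 1 ≤ (t i : ℕ) := by
          intro i
          by_cases hi : i = 0
          · subst hi; exact h0pos
          · have h1 := Fin.lt_def.mp (hmono 0 i (Fin.pos_of_ne_zero hi))
            omega
        refine ⟨fun i => ⟨(t i : ℕ) - 1, by
            have := (t i).isLt; have := hpos i; omega⟩, ⟨?_, ?_⟩, ?_⟩
        · intro i j hij
          have h1 := Fin.lt_def.mp (hmono i j hij)
          have := hpos i
          exact Fin.mk_lt_mk.mpr (by omega)
        · intro i
          have h1 := hpt i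
          have := hpos i
          simp only []
          omega
        · funext i
          exact Fin.ext (by have := hpos i; simp [Fin.val_succ]; omega)
      · rintro ⟨s, ⟨hmono, hpt⟩, rfl⟩
        refine ⟨⟨?_, ?_⟩, by simp [Fin.succ_ne_zero]⟩
        · intro i j hij
          exact Fin.succ_lt_succ_iff.mpr (hmono i j hij)
        · intro i
          have := hpt i
          simp only [Fin.val_succ]
          omega
    rw [himg, Finset.sum_image ?hinjB]
    case hinjB =>
      intro s1 _ s2 _ heq
      funext i
      have := congrFun heq i
      simpa [Fin.succ_inj] using this
    refine Finset.sum_congr rfl fun s hs => ?_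
    refine Finset.prod_congr rfl fun i _ => ?_
    simp [Fin.val_succ]

lemma gamma_penult (a : ℕ → ℤ) (n : ℕ) :
    gamma a (n+1) n = gamma (fun i => a (i+1)) n n := by
  cases n with
  | zero => rw [gamma_zero, gamma_zero]
  | succ m =>
    rw [gamma_succ, if_neg (by omega), zero_add]

lemma gamma_top (a : ℕ → ℤ) (n : ℕ) :
    gamma a (n+1) (n+1) = a 1 * gamma (fun i => a (i+1)) n n := by
  rw [gamma_succ, if_pos rfl, gamma_of_lt _ (Nat.lt_succ_self n), add_zero]

lemma gamma_top_pos (a : ℕ → ℤ) (ha : ∀ i, 0 < a i) (n : ℕ) : 0 < gamma a n n := by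
  induction n generalizing a with
  | zero => rw [gamma_zero]; norm_num
  | succ m ih =>
    rw [gamma_top]
    exact mul_pos (ha 1) (ih _ (fun i => ha (i+1)))

lemma main_aux : ∀ n (a b : ℕ → ℤ), (∀ i, 0 < a i) → (∀ i, 0 < b i) →
    (∀ l ≤ n, gamma a n l = gamma b n l) → ∀ i, 1 ≤ i → i ≤ n → a i = b i := by
  intro n
  induction n with
  | zero => intro a b _ _ _ i h1 h2; omega
  | succ m ih =>
    intro a b ha hb h i h1 h2
    have hG : gamma (fun i => a (i+1)) m m = gamma (fun i => b (i+1)) m m := by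
      rw [← gamma_penult, ← gamma_penult]; exact h m (Nat.le_succ m)
    have hGpos : 0 < gamma (fun i => a (i+1)) m m :=
      gamma_top_pos _ (fun i => ha (i+1)) m
    have h1eq : a 1 = b 1 := by
      have hh := h (m+1) le_rfl
      rw [gamma_top, gamma_top, ← hG] at hh
      exact mul_right_cancel₀ (ne_of_gt hGpos) hh
    have hsh : ∀ l ≤ m, gamma (fun i => a (i+1)) m l = gamma (fun i => b (i+1)) m l := by
      intro l
      induction l with
      | zero => intro _; rw [gamma_zero, gamma_zero]
      | succ k ihk =>
        intro hk
        have hik := ihk (Nat.le_of_succ_le hk)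
        have hh := h (k+1) (by omega)
        rw [gamma_succ a m k, gamma_succ b m k] at hh
        by_cases hp : (k+1) % 2 = (m+1) % 2
        · rw [if_pos hp, if_pos hp, h1eq, hik] at hh
          exact add_left_cancel hh
        · rw [if_neg hp, if_neg hp, zero_add, zero_add] at hh
          exact hh
    by_cases hi1 : i = 1
    · subst hi1; exact h1eq
    · have := ih (fun j => a (j+1)) (fun j => b (j+1))
        (fun j => ha (j+1)) (fun j => hb (j+1)) hsh (i-1) (by omega) (by omega)
      have hi : i - 1 + 1 = i := by omega
      simpa [hi] using this

theorem stmt10 (n : ℕ) (hn : n % 2 = 0) (a b : ℕ → ℤ)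
    (ha : ∀ i, 0 < a i) (hb : ∀ i, 0 < b i)
    (h : ∀ l ≤ n, gamma a n l = gamma b n l) :
    ∀ i, 1 ≤ i → i ≤ n → a i = b i :=
  main_aux n a b ha hb h
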